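/- For any modal formula A and any natural number s with s > cx(A), the following are equivalent: (1) GL_ω proves ¬□A, where GL_ω = GL + {◇^n⊤ : n ∈ ω}; (2) GL + {¬(□^{s+1}⊥ → □^s⊥)} proves ¬□A. -/

import Mathlib

/-- Modal propositional formulas (variables are indexed by `ℕ`). -/
inductive MF : Type
  | var : ℕ → MF
  | fal : MF
  | imp : MF → MF → MF
  | box : MF → MF
deriving DecidableEq

namespace MF

def neg (A : MF) : MF := imp A fal
def top : MF := neg fal
def conj (A B : MF) : MF := neg (imp A (neg B))
def disj (A B : MF) : MF := imp (neg A) B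
def biimp (A B : MF) : MF := conj (imp A B) (imp B A)
def dia (A : MF) : MF := neg (box (neg A))
def boxn : ℕ → MF → MF
  | 0, A => A
  | n+1, A => box (boxn n A)
def dian (n : ℕ) (A : MF) : MF := neg (boxn n (neg A))

/-- Uniform substitution. -/
def subst (s : ℕ → MF) : MF → MF
  | var n => s n
  | fal => fal
  | imp A B => imp (subst s A) (subst s B)
  | box A => box (subst s A)

/-- The set of subformulas. -/
def subF : MF → Finset MF
  | var n => {var n}
  | fal => {fal}
  | imp A B => insert (imp A B) (subF A ∪ subF B)
  | box A => insert (box A) (subF A)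

def isBox : MF → Bool
  | box _ => true
  | _ => false

def unbox : MF → MF
  | box A => A
  | A => A

/-- `cx A` is the number of subformulas of `A` of the form `□C`. -/
def cx (A : MF) : ℕ := ((subF A).filter (fun B => isBox B = true)).card

/-- `Rf(A) = {□B → B : □B ∈ Sub(A)}`. -/
def RfSet (A : MF) : Finset MF :=
  ((subF A).filter (fun B => isBox B = true)).image (fun B => imp B (unbox B))

/-- Conjunction of a finite set of formulas. -/
noncomputable def conjFin (s : Finset MF) : MF := s.toList.foldr conj top

/-- `A` is an instance of a propositional tautology. -/
def TautInst (A : MF) : Prop :=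
  ∀ v : MF → Bool, (∀ B C, v (imp B C) = (!(v B) || v C)) → v fal = false → v A = true

end MF

/-- Provability in the Gödel–Löb logic GL. -/
inductive GLPrv : MF → Prop
  | taut {A} : MF.TautInst A → GLPrv A
  | k (A B : MF) : GLPrv (MF.imp (MF.box (MF.imp A B)) (MF.imp (MF.box A) (MF.box B)))
  | lob (A : MF) : GLPrv (MF.imp (MF.box (MF.imp (MF.box A) A)) (MF.box A))
  | mp {A B} : GLPrv (MF.imp A B) → GLPrv A → GLPrv B
  | nec {A} : GLPrv A → GLPrv (MF.box A)

/-- Provability in GL + Γ: axioms are GL-theorems and substitution instances of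
formulas in Γ; rules are modus ponens (and substitution, built into the axiom rule). -/
inductive ExtPrv (Ax : Set MF) : MF → Prop
  | gl {A} : GLPrv A → ExtPrv Ax A
  | ax {A} (s : ℕ → MF) : A ∈ Ax → ExtPrv Ax (A.subst s)
  | mp {A B} : ExtPrv Ax (MF.imp A B) → ExtPrv Ax A → ExtPrv Ax B

/-- GL_ω = GL + {◇ⁿ⊤ : n ∈ ω}. -/
def GLomegaPrv : MF → Prop := ExtPrv (Set.range fun n => MF.dian n MF.top)

/-- GLS = GL + {□p → p}. -/
def GLSPrv : MF → Prop := ExtPrv {MF.imp (MF.box (MF.var 0)) (MF.var 0)}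

/-- F_s = □^{s+1}⊥ → □^s⊥. -/
def Fmla (s : ℕ) : MF := MF.imp (MF.boxn (s+1) MF.fal) (MF.boxn s MF.fal)

/-- GL + {¬F_s}. -/
def GLFPrv (s : ℕ) : MF → Prop := ExtPrv {MF.neg (Fmla s)}

/-!
Both sides are equivalent to `GL ⊢ □A → □ˢ⊥`. For `GL + ¬Fₛ` this is Löb's rule for
`□A → □ˢ⊥`, together with `□A → □□A`. A derivation in `GL_ω` uses finitely many axioms `◇ⁿ⊤`, so `GL_ω ⊢ ¬□A` amounts to
`GL ⊢ □A → □ᴺ⊥` for some `N`, and `N` can be lowered to `s` semantically. If `□A` holds at `w`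
while `□ˢ⊥` fails there, the boxed subformulas of `A` true along an `R`-chain of length `s` from
`w` increase inside a set of size `cx A < s`, so they are the same at two consecutive worlds
`a R b`. Then `b` satisfies `□C → C` for every `□C ∈ Sub(□A)`, and inserting below `b` an
infinite descending sequence of copies of `b` keeps `□A` true at `w` while making `□ᴺ⊥` false at
`w` for every `N`.
-/

open MF

namespace MF

def imps (L : List MF) (B : MF) : MF := L.foldr imp B

@[simp] theorem imps_nil (B : MF) : imps [] B = B := rfl

@[simp] theorem imps_cons (A : MF) (L : List MF) (B : MF) :
    imps (A :: L) B = imp A (imps L B) := rfl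

@[simp] theorem subst_var (A : MF) : A.subst var = A := by
  induction A <;> simp_all [subst]

theorem subst_boxn (σ : ℕ → MF) (n : ℕ) (A : MF) :
    (boxn n A).subst σ = boxn n (A.subst σ) := by
  induction n <;> simp_all [boxn, subst]

theorem boxn_add (m n : ℕ) (A : MF) : boxn (m + n) A = boxn m (boxn n A) := by
  induction m <;> simp_all [boxn, Nat.succ_add]

end MF

structure TruthAssignment where
  Holds : MF → Prop
  holds_imp : ∀ B C, Holds (imp B C) ↔ (Holds B → Holds C)
  not_holds_fal : ¬ Holds fal

namespace TruthAssignment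

attribute [simp] holds_imp not_holds_fal

variable (v : TruthAssignment)

@[simp] theorem holds_neg (A : MF) : v.Holds (neg A) ↔ ¬ v.Holds A := by simp [neg]

@[simp] theorem holds_conj (A B : MF) : v.Holds (conj A B) ↔ v.Holds A ∧ v.Holds B := by
  simp [conj]

@[simp] theorem holds_top : v.Holds top := by simp [top]

@[simp] theorem holds_imps (L : List MF) (B : MF) :
    v.Holds (imps L B) ↔ ((∀ A ∈ L, v.Holds A) → v.Holds B) := by
  induction L <;> simp_all

open Classical in
noncomputable def literal (B : MF) : MF := if v.Holds B then B else neg B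

end TruthAssignment

theorem MF.tautInst_iff (A : MF) : TautInst A ↔ ∀ v : TruthAssignment, v.Holds A := by
  classical
  refine ⟨fun h v => ?_, fun h v hv hf => ?_⟩
  · simpa using h (fun B => decide (v.Holds B))
      (fun B C => by by_cases v.Holds B <;> simp [*]) (by simp)
  · refine h ⟨fun B => v B = true, fun B C => ?_, by simp [hf]⟩
    rw [hv]
    cases v B <;> simp

namespace GLPrv

theorem of_valid {A : MF} (h : ∀ v : TruthAssignment, v.Holds A) : GLPrv A :=
  .taut ((tautInst_iff A).2 h)

theorem of_taut_consequence {L : List MF} {B : MF} (hL : ∀ A ∈ L, GLPrv A)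
    (h : ∀ v : TruthAssignment, (∀ A ∈ L, v.Holds A) → v.Holds B) : GLPrv B := by
  have himps : GLPrv (imps L B) := of_valid fun v => (v.holds_imps L B).2 (h v)
  clear h
  induction L with
  | nil => exact himps
  | cons A L ih => exact ih (fun C hC => hL C (by simp [hC])) (.mp himps (hL A (by simp)))

theorem taut_mp {A B : MF} (hA : GLPrv A) (h : ∀ v : TruthAssignment, v.Holds A → v.Holds B) :
    GLPrv B :=
  of_taut_consequence (L := [A]) (by simpa using hA) (by simpa using h)

theorem taut_mp₂ {A B C : MF} (hA : GLPrv A) (hB : GLPrv B)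
    (h : ∀ v : TruthAssignment, v.Holds A → v.Holds B → v.Holds C) : GLPrv C :=
  of_taut_consequence (L := [A, B]) (by simp [hA, hB]) (by simpa using h)

theorem imp_trans {A B C : MF} (h₁ : GLPrv (imp A B)) (h₂ : GLPrv (imp B C)) :
    GLPrv (imp A C) :=
  taut_mp₂ h₁ h₂ fun v => by simp; tauto

theorem box_mono {A B : MF} (h : GLPrv (imp A B)) : GLPrv (imp (box A) (box B)) :=
  .mp (.k A B) (.nec h)

theorem boxn_mono {A B : MF} (h : GLPrv (imp A B)) (n : ℕ) :
    GLPrv (imp (boxn n A) (boxn n B)) := by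
  induction n with
  | zero => exact h
  | succ n ih => exact box_mono ih

theorem lob_rule {A : MF} (h : GLPrv (imp (box A) A)) : GLPrv A :=
  taut_mp₂ h (.mp (.lob A) (.nec h)) fun v => by simp

theorem box_four (A : MF) : GLPrv (imp (box A) (box (box A))) := by
  let B := conj A (box A)
  have hBA : GLPrv (imp (box B) (box A)) := box_mono (of_valid fun v => by simp [B]; tauto)
  have hB : GLPrv (imp A (imp (box B) B)) := taut_mp hBA fun v => by simp [B]; tauto
  have hAB : GLPrv (imp (box A) (box B)) := imp_trans (box_mono hB) (.lob B)
  exact imp_trans hAB (box_mono (of_valid fun v => by simp [B]))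

theorem imps_box {L : List MF} {C : MF} (h : GLPrv (imps L C)) :
    GLPrv (imps (L.map box) (box C)) := by
  suffices hdist : ∀ L : List MF, GLPrv (imp (box (imps L C)) (imps (L.map box) (box C))) from
    .mp (hdist L) (.nec h)
  intro L
  induction L with
  | nil => exact of_valid fun v => by simp
  | cons A L ih => exact taut_mp₂ (.k A (imps L C)) ih fun v => by simp; tauto

theorem box_imp_of_box_imp_reflection {P Q : MF} (h : GLPrv (imp (box P) (imp (box Q) Q))) :
    GLPrv (imp (box P) Q) := by
  have hK : GLPrv (imp (box (imp (box P) Q)) (imp (box P) (box Q))) :=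
    taut_mp₂ (.k (box P) Q) (box_four P) fun v => by simp; tauto
  exact lob_rule (taut_mp₂ h hK fun v => by simp; tauto)

theorem boxn_imp_boxn_of_le {A : MF} (hA : GLPrv (neg A)) {m n : ℕ} (hmn : m ≤ n) :
    GLPrv (imp (boxn m A) (boxn n A)) := by
  obtain ⟨k, rfl⟩ := Nat.exists_eq_add_of_le hmn
  rw [boxn_add]
  exact boxn_mono (taut_mp hA fun v => by simp; tauto) m

theorem dian_top_imp_dian_top {m n : ℕ} (hmn : m ≤ n) :
    GLPrv (imp (dian n top) (dian m top)) :=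
  taut_mp (boxn_imp_boxn_of_le (A := neg top) (of_valid fun v => by simp) hmn)
    fun v => by simp [dian]; tauto

end GLPrv

namespace ExtPrv

variable {Ax : Set MF}

theorem of_mem {A : MF} (hA : A ∈ Ax) : ExtPrv Ax A := by
  simpa using ExtPrv.ax var hA

theorem exists_imp {P : ℕ → MF} (hP : ∀ {m n}, m ≤ n → GLPrv (imp (P n) (P m)))
    (hAx : ∀ A ∈ Ax, ∀ σ, ∃ n, GLPrv (imp (P n) (A.subst σ))) {B : MF} (h : ExtPrv Ax B) :
    ∃ n, GLPrv (imp (P n) B) := by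
  induction h with
  | gl h => exact ⟨0, h.taut_mp fun v => by simp; tauto⟩
  | ax σ hA => exact hAx _ hA σ
  | mp _ _ ih₁ ih₂ =>
    obtain ⟨n₁, h₁⟩ := ih₁
    obtain ⟨n₂, h₂⟩ := ih₂
    exact ⟨max n₁ n₂, GLPrv.taut_mp₂ (GLPrv.imp_trans (hP (le_max_left n₁ n₂)) h₁)
      (GLPrv.imp_trans (hP (le_max_right n₁ n₂)) h₂) fun v => by simp; tauto⟩

end ExtPrv

theorem glomegaPrv_iff (B : MF) : GLomegaPrv B ↔ ∃ n, GLPrv (imp (dian n top) B) := by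
  refine ⟨ExtPrv.exists_imp GLPrv.dian_top_imp_dian_top ?_,
    fun ⟨n, h⟩ => .mp (.gl h) (.of_mem ⟨n, rfl⟩)⟩
  rintro _ ⟨n, rfl⟩ σ
  exact ⟨n, .of_valid fun v => by simp [dian, top, neg, subst, subst_boxn]⟩

theorem glfPrv_iff (s : ℕ) (B : MF) : GLFPrv s B ↔ GLPrv (imp (neg (Fmla s)) B) := by
  have hself : GLPrv (imp (neg (Fmla s)) (neg (Fmla s))) := .of_valid fun v => by simp
  refine ⟨fun h => ?_, fun h => .mp (.gl h) (.of_mem rfl)⟩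
  obtain ⟨_, hB⟩ := ExtPrv.exists_imp (P := fun _ => neg (Fmla s)) (fun _ => hself) (by
    rintro _ rfl σ
    exact ⟨0, by simpa [Fmla, neg, subst, subst_boxn] using hself⟩) h
  exact hB

theorem glomegaPrv_neg_box_iff (A : MF) :
    GLomegaPrv (neg (box A)) ↔ ∃ n, GLPrv (imp (box A) (boxn n fal)) := by
  rw [glomegaPrv_iff]
  refine exists_congr fun n => ⟨fun h => ?_, fun h => ?_⟩
  · refine GLPrv.taut_mp₂ h (GLPrv.boxn_mono (A := neg top) (B := fal) ?_ n) fun v => ?_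
    · exact .of_valid fun v => by simp
    · simp [dian]
      tauto
  · refine GLPrv.taut_mp₂ h (GLPrv.boxn_mono (A := fal) (B := neg top) ?_ n) fun v => ?_
    · exact .of_valid fun v => by simp
    · simp [dian]
      tauto

theorem glfPrv_neg_box_iff (A : MF) (s : ℕ) :
    GLFPrv s (neg (box A)) ↔ GLPrv (imp (box A) (boxn s fal)) := by
  rw [glfPrv_iff]
  refine ⟨fun h => ?_, fun h => h.taut_mp fun v => by simp [Fmla]; tauto⟩
  exact GLPrv.box_imp_of_box_imp_reflection (h.taut_mp fun v => by simp [Fmla, boxn]; tauto)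

structure KripkeModel where
  W : Type
  R : W → W → Prop
  V : ℕ → W → Prop
  trans : ∀ {x y z}, R x y → R y z → R x z
  wf : WellFounded fun x y => R y x

namespace KripkeModel

def Sat (M : KripkeModel) (w : M.W) : MF → Prop
  | var n => M.V n w
  | fal => False
  | imp A B => M.Sat w A → M.Sat w B
  | box A => ∀ u, M.R w u → M.Sat u A

variable (M : KripkeModel)

def truthAssignment (w : M.W) : TruthAssignment :=
  ⟨M.Sat w, fun _ _ => Iff.rfl, id⟩

theorem irrefl (w : M.W) : ¬ M.R w w :=
  fun h => M.wf.asymmetric w w h h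

variable {M}

theorem sat_box_of_R {u v : M.W} (huv : M.R u v) {A : MF} (h : M.Sat u (box A)) :
    M.Sat v (box A) ∧ M.Sat v A :=
  ⟨fun x hvx => h x (M.trans huv hvx), h v huv⟩

end KripkeModel

theorem GLPrv.sound {A : MF} (h : GLPrv A) (M : KripkeModel) (w : M.W) : M.Sat w A := by
  induction h generalizing w with
  | taut h => exact (tautInst_iff _).1 h (M.truthAssignment w)
  | k A B => exact fun hAB hA u hu => hAB u hu (hA u hu)
  | lob A =>
    intro hlob u hu
    induction u using M.wf.induction with
    | _ u ih => exact hlob u hu fun x hx => ih x hx (M.trans hu hx)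
  | mp _ _ ih₁ ih₂ => exact ih₁ w (ih₂ w)
  | nec _ ih => exact fun u _ => ih u

def Consistent (L : List MF) : Prop := ¬ GLPrv (imps L fal)

namespace Consistent

open TruthAssignment

variable {L : List MF}

theorem mono {L' : List MF} (h : Consistent L') (hLL' : ∀ A ∈ L, A ∈ L') : Consistent L :=
  fun hL => h <| hL.taut_mp fun v => by
    simp only [holds_imps, not_holds_fal]
    exact fun hv hv' => hv fun A hA => hv' A (hLL' A hA)

theorem exists_truthAssignment (h : Consistent L) :
    ∃ v : TruthAssignment, ∀ A ∈ L, v.Holds A := by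
  by_contra hv
  push Not at hv
  exact h (.of_valid fun v => by simpa using hv v)

theorem cons_or_cons_neg (h : Consistent L) (B : MF) :
    Consistent (B :: L) ∨ Consistent (neg B :: L) := by
  by_contra hc
  simp only [Consistent, not_or, not_not] at hc
  exact h (GLPrv.taut_mp₂ hc.1 hc.2 fun v => by simp; tauto)

theorem exists_truthAssignment_literals (h : Consistent L) (l : List MF) :
    ∃ v : TruthAssignment, (∀ A ∈ L, v.Holds A) ∧ Consistent (l.map v.literal ++ L) := by
  induction l generalizing L with
  | nil =>
    obtain ⟨v, hv⟩ := h.exists_truthAssignment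
    exact ⟨v, hv, h⟩
  | cons B l ih =>
    obtain ⟨B', hB', hcon⟩ : ∃ B', (B' = B ∨ B' = neg B) ∧ Consistent (B' :: L) :=
      (h.cons_or_cons_neg B).elim (⟨B, .inl rfl, ·⟩) (⟨neg B, .inr rfl, ·⟩)
    obtain ⟨v, hv, hvcon⟩ := ih hcon
    have hlit : v.literal B = B' := by
      have := hv B' (by simp)
      rcases hB' with rfl | rfl <;> simp_all [literal]
    refine ⟨v, fun A hA => hv A (by simp [hA]), hvcon.mono fun A hA => ?_⟩
    simp only [List.map_cons, hlit, List.cons_append, List.mem_cons, List.mem_append] at hA ⊢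
    tauto

theorem lob_step {B : MF} {Γ : List MF} (h : Consistent (neg (box B) :: Γ.map box)) :
    Consistent (neg B :: box B :: (Γ.map box ++ Γ)) := by
  intro hinc
  have hrefl : GLPrv (imps (Γ.map box ++ Γ) (imp (box B) B)) :=
    hinc.taut_mp fun v => by
      simp only [holds_imps, List.forall_mem_cons, holds_neg, holds_imp, not_holds_fal]
      tauto
  have hbox : GLPrv (imps (Γ.map box) (box B)) := by
    refine GLPrv.of_taut_consequence
      (L := imps ((Γ.map box ++ Γ).map box) (box (imp (box B) B)) ::
        imp (box (imp (box B) B)) (box B) :: Γ.map fun C => imp (box C) (box (box C))) ?_ ?_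
    · simp only [List.forall_mem_cons, List.forall_mem_map]
      exact ⟨GLPrv.imps_box hrefl, .lob B, fun C _ => .box_four C⟩
    · intro v hv
      simp only [List.forall_mem_cons, List.forall_mem_map, List.map_append,
        List.forall_mem_append, holds_imps, holds_imp] at hv ⊢
      obtain ⟨hrefl, hlob, hfour⟩ := hv
      exact fun hΓ => hlob (hrefl ⟨fun C hC => hfour C hC (hΓ C hC), hΓ⟩)
  exact h <| hbox.taut_mp fun v => by
    simp only [holds_imps, List.forall_mem_cons, List.forall_mem_map, holds_neg, not_holds_fal]
    tauto

end Consistent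

/-- A world is a whole truth assignment, which takes care of the propositional connectives;
only its values on `Φ` are required to be GL-consistent. -/
def CanonicalWorld (Φ : Finset MF) : Type :=
  {v : TruthAssignment // Consistent (Φ.toList.map v.literal)}

namespace CanonicalWorld

variable {Φ : Finset MF}

def R (X Y : CanonicalWorld Φ) : Prop :=
  (∀ C, box C ∈ Φ → X.1.Holds (box C) → Y.1.Holds (box C) ∧ Y.1.Holds C) ∧
    ∃ C, box C ∈ Φ ∧ ¬ X.1.Holds (box C) ∧ Y.1.Holds (box C)

theorem R_trans {X Y Z : CanonicalWorld Φ} (hXY : R X Y) (hYZ : R Y Z) : R X Z := by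
  obtain ⟨hXY, C, hC, hXC, hYC⟩ := hXY
  exact ⟨fun D hD hXD => hYZ.1 D hD (hXY D hD hXD).1, C, hC, hXC, (hYZ.1 C hC hYC).1⟩

theorem wellFounded_R_flip : WellFounded fun X Y : CanonicalWorld Φ => R Y X := by
  classical
  let falseBoxes (X : CanonicalWorld Φ) : Finset MF :=
    Φ.filter fun D => (∃ C, D = box C) ∧ ¬ X.1.Holds D
  refine (measure fun X => (falseBoxes X).card).wf.mono fun Y X hXY => ?_
  refine Finset.card_lt_card ⟨fun D hD => ?_, fun hsub => ?_⟩
  · simp only [falseBoxes, Finset.mem_filter] at hD ⊢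
    obtain ⟨hDΦ, ⟨C, rfl⟩, hYD⟩ := hD
    exact ⟨hDΦ, ⟨C, rfl⟩, fun hXD => hYD (hXY.1 C hDΦ hXD).1⟩
  · obtain ⟨C, hC, hXC, hYC⟩ := hXY.2
    have hYC' := hsub (Finset.mem_filter.2 ⟨hC, ⟨C, rfl⟩, hXC⟩)
    exact (Finset.mem_filter.1 hYC').2.2 hYC

theorem exists_R_not_holds (X : CanonicalWorld Φ) {B : MF} (hB : box B ∈ Φ)
    (hX : ¬ X.1.Holds (box B)) : ∃ Y, R X Y ∧ ¬ Y.1.Holds B := by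
  classical
  obtain ⟨Γ, hΓ⟩ : ∃ Γ : List MF, ∀ C, C ∈ Γ ↔ box C ∈ Φ ∧ X.1.Holds (box C) :=
    ⟨((Φ.preimage box (Function.Injective.injOn fun _ _ h => box.inj h)).filter
      fun C => X.1.Holds (box C)).toList, by simp⟩
  have hcon : Consistent (neg (box B) :: Γ.map box) := X.2.mono fun A hA => by
    simp only [List.mem_cons, List.mem_map, Finset.mem_toList] at hA ⊢
    rcases hA with rfl | ⟨C, hC, rfl⟩
    · exact ⟨box B, hB, by simp [TruthAssignment.literal, hX]⟩
    · obtain ⟨hCΦ, hXC⟩ := (hΓ C).1 hC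
      exact ⟨box C, hCΦ, by simp [TruthAssignment.literal, hXC]⟩
  obtain ⟨v, hv, hvcon⟩ := hcon.lob_step.exists_truthAssignment_literals Φ.toList
  have hvΓ : ∀ C ∈ Γ, v.Holds (box C) ∧ v.Holds C := fun C hC =>
    ⟨hv _ (by simp [hC]), hv _ (by simp [hC])⟩
  refine ⟨⟨v, hvcon.mono fun A hA => List.mem_append_left _ hA⟩,
    ⟨fun C hC hXC => hvΓ C ((hΓ C).2 ⟨hC, hXC⟩), B, hB, hX, hv _ (by simp)⟩,
    (v.holds_neg B).1 (hv _ (by simp))⟩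

end CanonicalWorld

def canonicalModel (Φ : Finset MF) : KripkeModel where
  W := CanonicalWorld Φ
  R := CanonicalWorld.R
  V n X := X.1.Holds (var n)
  trans := CanonicalWorld.R_trans
  wf := CanonicalWorld.wellFounded_R_flip

theorem sat_canonicalModel_iff {Φ : Finset MF} {B : MF} (hB : subF B ⊆ Φ)
    (X : CanonicalWorld Φ) : (canonicalModel Φ).Sat X B ↔ X.1.Holds B := by
  induction B generalizing X with
  | var n => exact Iff.rfl
  | fal => simp [KripkeModel.Sat]
  | imp B C ihB ihC =>
    obtain ⟨-, hBΦ, hCΦ⟩ : imp B C ∈ Φ ∧ subF B ⊆ Φ ∧ subF C ⊆ Φ := by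
      simpa only [subF, Finset.insert_subset_iff, Finset.union_subset_iff] using hB
    simp only [KripkeModel.Sat, ihB hBΦ, ihC hCΦ, TruthAssignment.holds_imp]
  | box B ih =>
    obtain ⟨hbox, hBΦ⟩ : box B ∈ Φ ∧ subF B ⊆ Φ := by
      simpa only [subF, Finset.insert_subset_iff] using hB
    refine ⟨fun h => ?_, fun h Y hXY => (ih hBΦ Y).2 (hXY.1 B hbox h).2⟩
    by_contra hX
    obtain ⟨Y, hXY, hY⟩ := X.exists_R_not_holds hbox hX
    exact hY ((ih hBΦ Y).1 (h Y hXY))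

theorem GLPrv.complete {A : MF} (h : ∀ (M : KripkeModel) (w : M.W), M.Sat w A) : GLPrv A := by
  by_contra hA
  have hcon : Consistent [neg A] := fun hneg => hA (hneg.taut_mp fun v => by simp)
  obtain ⟨v, hv, hvcon⟩ := hcon.exists_truthAssignment_literals (subF A).toList
  let X : CanonicalWorld (subF A) := ⟨v, hvcon.mono fun B hB => List.mem_append_left _ hB⟩
  have hXA := (sat_canonicalModel_iff subset_rfl X).1 (h (canonicalModel _) X)
  exact (v.holds_neg A).1 (hv _ (by simp)) hXA

namespace KripkeModel

variable (M : KripkeModel) (b : M.W)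

/-- The accessibility relation of `M.stretch b`: the worlds `inr k` are copies of `b` inserted
just below it, each seeing `b`, everything above `b`, and the copies `inr j` with `j < k`. -/
def StretchR : M.W ⊕ ℕ → M.W ⊕ ℕ → Prop
  | .inl u, .inl v => M.R u v
  | .inl u, .inr _ => M.R u b
  | .inr _, .inl v => M.R b v ∨ v = b
  | .inr j, .inr k => k < j

variable {M b}

theorem not_R_of_R_or_eq {v : M.W} (hv : M.R b v ∨ v = b) : ¬ M.R v b := by
  rcases hv with hbv | rfl
  exacts [fun hvb => M.irrefl b (M.trans hbv hvb), M.irrefl v]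

theorem stretchR_trans {x y z : M.W ⊕ ℕ} (hxy : M.StretchR b x y) (hyz : M.StretchR b y z) :
    M.StretchR b x z := by
  rcases x with u | j <;> rcases y with v | k <;> rcases z with w | l <;>
    simp only [StretchR] at hxy hyz ⊢
  · exact M.trans hxy hyz
  · exact M.trans hxy hyz
  · rcases hyz with hbw | rfl
    exacts [M.trans hxy hbw, hxy]
  · exact hxy
  · rcases hxy with hbv | rfl
    exacts [.inl (M.trans hbv hyz), .inl hyz]
  · exact absurd hyz (not_R_of_R_or_eq hxy)
  · exact hyz
  · exact hyz.trans hxy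

theorem wellFounded_stretchR_flip : WellFounded fun x y => M.StretchR b y x := by
  have acc_above : ∀ v, M.R b v ∨ v = b → Acc (fun x y => M.StretchR b y x) (.inl v) := by
    intro v
    induction v using M.wf.induction with
    | _ v ih =>
      refine fun hv => ⟨_, fun y hvy => ?_⟩
      rcases y with w | k
      · refine ih w hvy ?_
        rcases hv with hbv | rfl
        exacts [.inl (M.trans hbv hvy), .inl hvy]
      · exact absurd hvy (not_R_of_R_or_eq hv)
  have acc_copy : ∀ k, Acc (fun x y => M.StretchR b y x) (.inr k) := by
    intro k
    induction k using Nat.strong_induction_on with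
    | _ k ih =>
      refine ⟨_, fun y hky => ?_⟩
      rcases y with w | j
      exacts [acc_above w hky, ih j hky]
  refine ⟨fun x => ?_⟩
  rcases x with u | k
  · induction u using M.wf.induction with
    | _ u ih =>
      refine ⟨_, fun y huy => ?_⟩
      rcases y with w | k
      exacts [ih w huy, acc_copy k]
  · exact acc_copy k

variable (M b)

def stretch : KripkeModel where
  W := M.W ⊕ ℕ
  R := M.StretchR b
  V n := Sum.elim (M.V n) fun _ => M.V n b
  trans := stretchR_trans
  wf := wellFounded_stretchR_flip

def ReflexiveFor (S : Finset MF) : Prop := ∀ C, box C ∈ S → M.Sat b (box C) → M.Sat b C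

variable {M b}

theorem sat_stretch_iff {A : MF} (hb : M.ReflexiveFor b (subF A)) :
    (∀ u, (M.stretch b).Sat (.inl u) A ↔ M.Sat u A) ∧
      ∀ k, (M.stretch b).Sat (.inr k) A ↔ M.Sat b A := by
  induction A with
  | var n => exact ⟨fun _ => Iff.rfl, fun _ => Iff.rfl⟩
  | fal => exact ⟨fun _ => Iff.rfl, fun _ => Iff.rfl⟩
  | imp B C ihB ihC =>
    have ihB := ihB fun D hD => hb D (by simp [subF, hD])
    have ihC := ihC fun D hD => hb D (by simp [subF, hD])
    exact ⟨fun u => imp_congr (ihB.1 u) (ihC.1 u), fun k => imp_congr (ihB.2 k) (ihC.2 k)⟩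
  | box B ih =>
    have hbB := hb B (by simp [subF])
    obtain ⟨ihl, ihr⟩ := ih fun D hD => hb D (by simp [subF, hD])
    refine ⟨fun u => ⟨fun h v huv => (ihl v).1 (h (.inl v) huv), fun h y huy => ?_⟩,
      fun k => ⟨fun h v hbv => (ihl v).1 (h (.inl v) (.inl hbv)), fun h y hky => ?_⟩⟩
    · rcases y with v | j
      exacts [(ihl v).2 (h v huy), (ihr j).2 (h b huy)]
    · rcases y with v | j
      · rcases hky with hbv | rfl
        exacts [(ihl v).2 (h v hbv), (ihl v).2 (hbB h)]
      · exact (ihr j).2 (hbB h)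

theorem not_sat_stretch_inr_boxn_fal (k : ℕ) : ¬ (M.stretch b).Sat (.inr k) (boxn k fal) := by
  induction k with
  | zero => exact id
  | succ k ih => exact fun h => ih (h (.inr k) (Nat.lt_succ_self k))

theorem not_sat_stretch_inl_boxn_fal {w : M.W} (hwb : M.R w b) (n : ℕ) :
    ¬ (M.stretch b).Sat (.inl w) (boxn n fal) := by
  cases n with
  | zero => exact id
  | succ n => exact fun h => not_sat_stretch_inr_boxn_fal n (h (.inr n) hwb)

variable (M) in
open Classical in
noncomputable def trueBoxes (A : MF) (u : M.W) : Finset MF :=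
  (subF A).filter fun D => isBox D = true ∧ M.Sat u D

theorem trueBoxes_mono {u v : M.W} (huv : M.R u v) (A : MF) :
    M.trueBoxes A u ⊆ M.trueBoxes A v := by
  intro D hD
  simp only [trueBoxes, Finset.mem_filter] at hD ⊢
  obtain ⟨hDA, hbox, hD⟩ := hD
  obtain ⟨C, rfl⟩ : ∃ C, D = box C := by cases D <;> simp_all [isBox]
  exact ⟨hDA, hbox, (sat_box_of_R huv hD).1⟩

theorem card_trueBoxes_le (A : MF) (u : M.W) : (M.trueBoxes A u).card ≤ cx A :=
  Finset.card_le_card fun D hD => by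
    simp only [trueBoxes, Finset.mem_filter] at hD ⊢
    exact ⟨hD.1, hD.2.1⟩

theorem exists_R_trueBoxes_subset (A : MF) (k : ℕ) (u : M.W) (hu : ¬ M.Sat u (boxn k fal))
    (hk : cx A < (M.trueBoxes A u).card + k) :
    ∃ a b, (a = u ∨ M.R u a) ∧ M.R a b ∧ M.trueBoxes A b ⊆ M.trueBoxes A a := by
  induction k generalizing u with
  | zero => exact absurd hk (not_lt.2 (card_trueBoxes_le A u))
  | succ k ih =>
    obtain ⟨v, huv, hv⟩ : ∃ v, M.R u v ∧ ¬ M.Sat v (boxn k fal) := by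
      by_contra h
      push Not at h
      exact hu h
    by_cases hvu : M.trueBoxes A v ⊆ M.trueBoxes A u
    · exact ⟨u, v, .inl rfl, huv, hvu⟩
    · have hlt := Finset.card_lt_card ((trueBoxes_mono huv A).ssubset_of_not_subset hvu)
      obtain ⟨a, b, hva, hab, hba⟩ := ih v hv (by omega)
      exact ⟨a, b, .inr (hva.elim (· ▸ huv) (M.trans huv)), hab, hba⟩

theorem exists_R_reflexiveFor {A : MF} {s : ℕ} {w : M.W} (hs : cx A < s)
    (hA : M.Sat w (box A)) (hw : ¬ M.Sat w (boxn s fal)) :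
    ∃ b, M.R w b ∧ M.ReflexiveFor b (subF (box A)) := by
  obtain ⟨a, b, hwa, hab, hba⟩ := exists_R_trueBoxes_subset A s w hw (by omega)
  have hwb : M.R w b := hwa.elim (· ▸ hab) (M.trans · hab)
  refine ⟨b, hwb, fun C hC hbC => ?_⟩
  rcases Finset.mem_insert.1 hC with hCA | hC
  · obtain rfl := box.inj hCA
    exact hA b hwb
  · have hbC' : box C ∈ M.trueBoxes A b := by
      simp only [trueBoxes, Finset.mem_filter]
      exact ⟨hC, rfl, hbC⟩
    have haC := hba hbC'
    simp only [trueBoxes, Finset.mem_filter] at haC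
    exact (sat_box_of_R hab haC.2.2).2

end KripkeModel

theorem GLPrv.box_imp_boxn_fal_of_cx_lt {A : MF} {s n : ℕ} (hs : cx A < s)
    (h : GLPrv (imp (box A) (boxn n fal))) : GLPrv (imp (box A) (boxn s fal)) := by
  refine GLPrv.complete fun M w hA => by_contra fun hw => ?_
  obtain ⟨b, hwb, hb⟩ := KripkeModel.exists_R_reflexiveFor hs hA hw
  have hA' : (M.stretch b).Sat (.inl w) (box A) := ((KripkeModel.sat_stretch_iff hb).1 w).2 hA
  exact KripkeModel.not_sat_stretch_inl_boxn_fal hwb n (h.sound _ _ hA')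

/-- For `s > cx A`: GL_ω ⊢ ¬□A iff GL + {¬F_s} ⊢ ¬□A. -/
theorem glomega_negbox_iff_glf (A : MF) (s : ℕ) (hs : s > MF.cx A) :
    GLomegaPrv (MF.neg (MF.box A)) ↔ GLFPrv s (MF.neg (MF.box A)) := by
  rw [glomegaPrv_neg_box_iff, glfPrv_neg_box_iff]
  exact ⟨fun ⟨_, h⟩ => GLPrv.box_imp_boxn_fal_of_cx_lt hs h, fun h => ⟨s, h⟩⟩
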